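/- Every committee maximizing the span-wise PAV score satisfies weak span-wise justified representation (weak-SW-JR). That is, in any approval-based sub-committee voting instance, if W* is a committee (|W* ∩ C_j| = k_j for all j) such that SW-PAV(W*) ≥ SW-PAV(W') for every committee W', then W* satisfies weak-SW-JR. -/
import Mathlib


open Finset

/-- Span-wise justified representation: every group of voters `X` with
`|X| ≥ n/k` and a commonly approved candidate has some approved candidate in `W`. -/
def SWJR {α : Type*} [DecidableEq α] (n k : ℕ) (A : Fin n → Finset α)
    (W : Finset α) : Prop :=
  ∀ X : Finset (Fin n), (n : ℝ) / (k : ℝ) ≤ (X.card : ℝ) →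
    (∃ c, ∀ i ∈ X, c ∈ A i) → (W ∩ X.biUnion A).Nonempty

/-- Weak span-wise justified representation: every group of voters `X` with
`|X| ≥ n/k` and a commonly approved candidate in *every* candidate subset `Cs j`
has some approved candidate in `W`. -/
def WeakSWJR {α : Type*} [DecidableEq α] (n ℓ k : ℕ) (Cs : Fin ℓ → Finset α)
    (A : Fin n → Finset α) (W : Finset α) : Prop :=
  ∀ X : Finset (Fin n), (n : ℝ) / (k : ℝ) ≤ (X.card : ℝ) →
    (∀ j, ∃ c ∈ Cs j, ∀ i ∈ X, c ∈ A i) → (W ∩ X.biUnion A).Nonempty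

/-- Intra-wise justified representation: for every subset `Cs j` (with quota `q j`),
every group of voters `X` with `|X| ≥ n/(q j)` and a commonly approved candidate in `Cs j`
has some approved candidate in `W ∩ Cs j`. -/
def IWJR {α : Type*} [DecidableEq α] (n ℓ : ℕ) (Cs : Fin ℓ → Finset α)
    (q : Fin ℓ → ℕ) (A : Fin n → Finset α) (W : Finset α) : Prop :=
  ∀ j, ∀ X : Finset (Fin n), (n : ℝ) / (q j : ℝ) ≤ (X.card : ℝ) →
    (∃ c ∈ Cs j, ∀ i ∈ X, c ∈ A i) → ((W ∩ Cs j) ∩ X.biUnion A).Nonempty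

/-- Justified representation in a single-committee approval voting instance
with committee size `κ` and ballots `B`. -/
def JR {α : Type*} [DecidableEq α] (n κ : ℕ) (B : Fin n → Finset α)
    (S : Finset α) : Prop :=
  ∀ X : Finset (Fin n), (n : ℝ) / (κ : ℝ) ≤ (X.card : ℝ) →
    (∃ c, ∀ i ∈ X, c ∈ B i) → (S ∩ X.biUnion B).Nonempty

/-- `harmonicR j = 1 + 1/2 + ⋯ + 1/j`, with `harmonicR 0 = 0`. -/
noncomputable def harmonicR (j : ℕ) : ℝ := ∑ p ∈ Finset.range j, (1 : ℝ) / (p + 1)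

/-- Span-wise PAV score of a committee `W`. -/
noncomputable def SWPAV {α : Type*} [DecidableEq α] (n : ℕ) (A : Fin n → Finset α)
    (W : Finset α) : ℝ :=
  ∑ i, harmonicR ((W ∩ A i).card)

/-- Intra-wise PAV score of a committee `W`. -/
noncomputable def IWPAV {α : Type*} [DecidableEq α] (n ℓ : ℕ) (Cs : Fin ℓ → Finset α)
    (A : Fin n → Finset α) (W : Finset α) : ℝ :=
  ∑ j, ∑ i, harmonicR ((W ∩ A i ∩ Cs j).card)

lemma harmonicR_mono : Monotone harmonicR := by
  intro a b hab
  unfold harmonicR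
  exact Finset.sum_le_sum_of_subset_of_nonneg (Finset.range_subset_range.mpr hab)
    (fun p _ _ => by positivity)

lemma harmonicR_succ (j : ℕ) : harmonicR (j + 1) = harmonicR j + 1 / (j + 1) := by
  unfold harmonicR
  rw [Finset.sum_range_succ]

lemma harmonicR_one : harmonicR 1 = 1 := by
  simp [harmonicR]

/-- every committee maximizing the span-wise PAV score among
all committees of the instance satisfies weak-SW-JR. -/
theorem stmt_13 {α : Type*} [DecidableEq α] (n ℓ : ℕ) (hn : 0 < n) (hℓ : 0 < ℓ)
    (Cs : Fin ℓ → Finset α)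
    (hdisj : ∀ j1 j2 : Fin ℓ, j1 ≠ j2 → Disjoint (Cs j1) (Cs j2))
    (q : Fin ℓ → ℕ) (hq : ∀ j, 0 < q j) (hqle : ∀ j, q j ≤ (Cs j).card)
    (A : Fin n → Finset α) (hA : ∀ i, A i ⊆ Finset.univ.biUnion Cs)
    (W : Finset α) (hWsub : W ⊆ Finset.univ.biUnion Cs)
    (hWcard : ∀ j, (W ∩ Cs j).card = q j)
    (hmax : ∀ W' : Finset α, W' ⊆ Finset.univ.biUnion Cs →
      (∀ j, (W' ∩ Cs j).card = q j) → SWPAV n A W' ≤ SWPAV n A W) :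
    WeakSWJR n ℓ (∑ j, q j) Cs A W := by
  intro X hX hcom
  by_contra hne
  rw [Finset.not_nonempty_iff_eq_empty] at hne
  have hnotmem : ∀ a ∈ W, ∀ i ∈ X, a ∉ A i := by
    intro a ha i hi hai
    have hmem : a ∈ W ∩ X.biUnion A :=
      Finset.mem_inter.mpr ⟨ha, Finset.mem_biUnion.mpr ⟨i, hi, hai⟩⟩
    rw [hne] at hmem
    exact absurd hmem (Finset.notMem_empty a)
  set k := ∑ j, q j with hk
  have hkpos : 0 < k := Finset.sum_pos (fun j _ => hq j) ⟨⟨0, hℓ⟩, Finset.mem_univ _⟩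
  have hkR : (0:ℝ) < (k:ℝ) := by exact_mod_cast hkpos
  have hnR : (0:ℝ) < (n:ℝ) := by exact_mod_cast hn
  have hXR : (0:ℝ) < (X.card : ℝ) := lt_of_lt_of_le (by positivity) hX
  have hXpos : 0 < X.card := by exact_mod_cast hXR
  have hXne : X.Nonempty := Finset.card_pos.mp hXpos
  have hempty : ∀ i ∈ X, W ∩ A i = ∅ := by
    intro i hi
    rw [Finset.eq_empty_iff_forall_notMem]
    intro a ha
    exact hnotmem a (Finset.mem_inter.mp ha).1 i hi (Finset.mem_inter.mp ha).2
  -- |W| = k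
  have hWeq : W = Finset.univ.biUnion fun j => W ∩ Cs j := by
    ext a
    simp only [Finset.mem_biUnion, Finset.mem_inter, Finset.mem_univ, true_and]
    constructor
    · intro ha
      obtain ⟨j, _, hj⟩ := Finset.mem_biUnion.mp (hWsub ha)
      exact ⟨j, ha, hj⟩
    · rintro ⟨j, ha, _⟩
      exact ha
  have hWk : W.card = k := by
    conv_lhs => rw [hWeq]
    rw [Finset.card_biUnion]
    · exact Finset.sum_congr rfl fun j _ => hWcard j
    · intro j1 _ j2 _ hne12
      exact Finset.disjoint_of_subset_left Finset.inter_subset_right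
        (Finset.disjoint_of_subset_right Finset.inter_subset_right (hdisj j1 j2 hne12))
  have hWne : W.Nonempty := Finset.card_pos.mp (hWk ▸ hkpos)
  -- the "loss" function
  set L : α → ℝ := fun w => ∑ i, if w ∈ A i then 1 / ((W ∩ A i).card : ℝ) else 0 with hL
  -- total loss bound
  have hsumL : ∑ w ∈ W, L w ≤ (n : ℝ) - X.card := by
    have hswap : ∑ w ∈ W, L w
        = ∑ i : Fin n, if (W ∩ A i).card = 0 then (0:ℝ) else 1 := by
      rw [hL, Finset.sum_comm]
      refine Finset.sum_congr rfl fun i _ => ?_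
      rw [Finset.sum_ite_mem, Finset.inter_comm W (A i), Finset.inter_comm (A i) W,
        Finset.sum_const, nsmul_eq_mul]
      by_cases h0 : (W ∩ A i).card = 0
      · simp [h0]
      · have hne0 : ((W ∩ A i).card : ℝ) ≠ 0 := by exact_mod_cast h0
        rw [if_neg h0, mul_one_div, div_self hne0]
    rw [hswap]
    have hsub : ∑ i : Fin n, (if (W ∩ A i).card = 0 then (0:ℝ) else 1)
        = ∑ i ∈ Finset.univ \ X, (if (W ∩ A i).card = 0 then (0:ℝ) else 1) := by
      refine (Finset.sum_subset (Finset.sdiff_subset) ?_).symm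
      intro i _ hiX
      have hiX' : i ∈ X := by
        by_contra h
        exact hiX (Finset.mem_sdiff.mpr ⟨Finset.mem_univ i, h⟩)
      simp [hempty i hiX']
    rw [hsub]
    calc ∑ i ∈ Finset.univ \ X, (if (W ∩ A i).card = 0 then (0:ℝ) else 1)
        ≤ ∑ _i ∈ Finset.univ \ X, (1:ℝ) := by
          refine Finset.sum_le_sum fun i _ => ?_
          split <;> norm_num
      _ = ((Finset.univ \ X).card : ℝ) := by simp
      _ = (n : ℝ) - X.card := by
          rw [Finset.card_sdiff_of_subset (Finset.subset_univ X)]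
          have hXn : X.card ≤ n := by
            simpa using Finset.card_le_card (Finset.subset_univ X)
          rw [show (Finset.univ : Finset (Fin n)).card = n by simp, Nat.cast_sub hXn]
  -- pick a cheapest member of W
  obtain ⟨w, hwW, hwmin⟩ := Finset.exists_min_image W L hWne
  have hLw : L w * k ≤ (n : ℝ) - X.card := by
    have hmin := Finset.card_nsmul_le_sum W L (L w) hwmin
    rw [hWk, nsmul_eq_mul] at hmin
    calc L w * k = (k:ℝ) * L w := by ring
      _ ≤ ∑ x ∈ W, L x := hmin
      _ ≤ (n : ℝ) - X.card := hsumL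
  -- pick the swap pair
  obtain ⟨j0, _, hwj0⟩ := Finset.mem_biUnion.mp (hWsub hwW)
  obtain ⟨c, hcC, hcA⟩ := hcom j0
  obtain ⟨i0, hi0⟩ := hXne
  have hcW : c ∉ W := fun h => hnotmem c h i0 hi0 (hcA i0 hi0)
  set W' := insert c (W.erase w) with hW'
  have hsub' : W' ⊆ Finset.univ.biUnion Cs := by
    intro a ha
    rcases Finset.mem_insert.mp ha with rfl | ha
    · exact Finset.mem_biUnion.mpr ⟨j0, Finset.mem_univ _, hcC⟩
    · exact hWsub (Finset.erase_subset _ _ ha)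
  have hcard' : ∀ j, (W' ∩ Cs j).card = q j := by
    intro j
    by_cases hj : j = j0
    · subst hj
      have hwmem : w ∈ W ∩ Cs j := Finset.mem_inter.mpr ⟨hwW, hwj0⟩
      have hcnot : c ∉ (W ∩ Cs j).erase w := by
        intro h
        exact hcW (Finset.mem_inter.mp (Finset.mem_of_mem_erase h)).1
      rw [hW', Finset.insert_inter_of_mem hcC, Finset.erase_inter,
        Finset.card_insert_of_notMem hcnot, Finset.card_erase_of_mem hwmem, hWcard j]
      exact Nat.succ_pred_eq_of_pos (hq j)
    · have hcj : c ∉ Cs j :=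
        fun h => Finset.disjoint_left.mp (hdisj j0 j fun e => hj e.symm) hcC h
      have hwj : w ∉ Cs j :=
        fun h => Finset.disjoint_left.mp (hdisj j0 j fun e => hj e.symm) hwj0 h
      rw [hW', Finset.insert_inter_of_notMem hcj, Finset.erase_inter,
        Finset.erase_eq_of_notMem (fun h => hwj (Finset.mem_inter.mp h).2), hWcard j]
  -- pointwise score comparison
  have hvoter : ∀ i : Fin n,
      harmonicR ((W ∩ A i).card) + (if i ∈ X then (1:ℝ) else 0)
        - (if w ∈ A i then 1 / ((W ∩ A i).card : ℝ) else 0)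
      ≤ harmonicR ((W' ∩ A i).card) := by
    intro i
    by_cases hiX : i ∈ X
    · have hm : W ∩ A i = ∅ := hempty i hiX
      have hwA : w ∉ A i := hnotmem w hwW i hiX
      have h1 : 1 ≤ (W' ∩ A i).card :=
        Finset.card_pos.mpr ⟨c, Finset.mem_inter.mpr ⟨Finset.mem_insert_self _ _, hcA i hiX⟩⟩
      rw [hm, if_pos hiX, if_neg hwA]
      simp only [Finset.card_empty]
      have h0 : harmonicR 0 = 0 := by simp [harmonicR]
      rw [h0]
      calc (0:ℝ) + 1 - 0 = harmonicR 1 := by rw [harmonicR_one]; ring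
        _ ≤ _ := harmonicR_mono h1
    · rw [if_neg hiX]
      by_cases hwA : w ∈ A i
      · have hwm : w ∈ W ∩ A i := Finset.mem_inter.mpr ⟨hwW, hwA⟩
        have hm1 : 0 < (W ∩ A i).card := Finset.card_pos.mpr ⟨w, hwm⟩
        obtain ⟨m, hm⟩ : ∃ m, (W ∩ A i).card = m + 1 :=
          ⟨(W ∩ A i).card - 1, (Nat.succ_pred_eq_of_pos hm1).symm⟩
        have hsubm : (W ∩ A i).erase w ⊆ W' ∩ A i := by
          intro a ha
          obtain ⟨haw, haWA⟩ := Finset.mem_erase.mp ha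
          obtain ⟨haW, haA⟩ := Finset.mem_inter.mp haWA
          exact Finset.mem_inter.mpr
            ⟨Finset.mem_insert_of_mem (Finset.mem_erase.mpr ⟨haw, haW⟩), haA⟩
        have hle : m ≤ (W' ∩ A i).card := by
          have hcc := Finset.card_le_card hsubm
          rw [Finset.card_erase_of_mem hwm, hm] at hcc
          simpa using hcc
        rw [if_pos hwA, hm, harmonicR_succ]
        push_cast
        have := harmonicR_mono hle
        linarith
      · have hsubm : W ∩ A i ⊆ W' ∩ A i := by
          intro a ha
          obtain ⟨haW, haA⟩ := Finset.mem_inter.mp ha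
          have haw : a ≠ w := fun e => hwA (e ▸ haA)
          exact Finset.mem_inter.mpr
            ⟨Finset.mem_insert_of_mem (Finset.mem_erase.mpr ⟨haw, haW⟩), haA⟩
        rw [if_neg hwA]
        have := harmonicR_mono (Finset.card_le_card hsubm)
        linarith
  -- sum the pointwise bound
  have hsum : SWPAV n A W + X.card - L w ≤ SWPAV n A W' := by
    have hb := Finset.sum_le_sum fun i (_ : i ∈ (Finset.univ : Finset (Fin n))) => hvoter i
    rw [Finset.sum_sub_distrib, Finset.sum_add_distrib] at hb
    have h1 : ∑ i : Fin n, (if i ∈ X then (1:ℝ) else 0) = X.card := by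
      rw [Finset.sum_ite_mem, Finset.univ_inter, Finset.sum_const, nsmul_eq_mul, mul_one]
    rw [h1] at hb
    simpa [SWPAV, hL] using hb
  -- contradiction
  have hfin := hmax W' hsub' hcard'
  have hXL : (X.card : ℝ) ≤ L w := by linarith
  have hXk : (n : ℝ) ≤ (X.card : ℝ) * k := by
    rw [div_le_iff₀ hkR] at hX
    linarith
  have hfinal : (X.card : ℝ) * k ≤ (n : ℝ) - X.card :=
    le_trans (mul_le_mul_of_nonneg_right hXL hkR.le) hLw
  linarith
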